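/- arXiv:2001.06995 — 3 statements merged into one kernel-verified Lean document; each statement's English description precedes it below -/
import Mathlib

section
/- Let $\mathbb{F}$ be a field and $m, d$ positive integers such that $(md)!/(d!)^m \neq 0$ in $\mathbb{F}$. Let $X_1,\ldots,X_m$ and $T_1,\ldots,T_m$ be finite subsets of $\mathbb{F}$ such that $|X_i - X_j| \leq 2d$ for all $i < j$ and $|T_i| \geq (m-1)d + 1$ for all $i$. Then there exist representatives $t_i \in T_i$ such that the translates $X_1 + t_1, \ldots, X_m + t_m$ are pairwise disjoint. -/
/-!
For `i < j` let `g_ij` be a monic polynomial of degree `2d` vanishing on `X_i - X_j`, and apply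
the Combinatorial Nullstellensatz to `∏_{i<j} g_ij(x_j - x_i)` on the grid `∏ T_i`: a point `t`
where it does not vanish has `t_j - t_i ∉ X_i - X_j`, i.e. disjoint translates. The top-degree
part of the product is `∏_{i<j} (x_j - x_i)^{2d} = ± ∏_{i ≠ j} (x_j - x_i)^d`, whose coefficient
at `∏_i x_i^{(m-1)d}` is `±(md)!/(d!)^m` by Dyson's constant term identity. In Good's proof
of that identity, an exponent `a_k = 0` lets the variable `x_k` be split off, and otherwise the
Lagrange interpolation identity `∑_k ∏_{j ≠ k} x_j / (x_j - x_k) = 1` lowers one exponent, in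
step with the Pascal recursion of multinomial coefficients.
-/

open Finset Pointwise

theorem Finsupp.eq_single_of_degree_le {σ : Type*} {α : σ →₀ ℕ} {k : σ}
    (h : α.degree ≤ α k) : α = Finsupp.single k (α k) := by
  have hsplit := Finsupp.single_add_erase k α
  have hrest : (α.erase k).degree = 0 := by
    have := congrArg Finsupp.degree hsplit
    rw [map_add, degree_single] at this
    omega
  rw [Finsupp.degree_eq_zero_iff] at hrest
  rw [hrest, add_zero] at hsplit
  exact hsplit.symm

theorem Finset.prod_prod_erase_eq_prod_lt {ι M : Type*} [Fintype ι] [LinearOrder ι]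
    [CommMonoid M] (f : ι → ι → M) :
    ∏ i, ∏ j ∈ univ.erase i, f i j
      = ∏ p ∈ univ.filter (fun p : ι × ι => p.1 < p.2), f p.1 p.2 * f p.2 p.1 := by
  have hne : ∏ i, ∏ j ∈ univ.erase i, f i j
      = ∏ p ∈ univ.filter (fun p : ι × ι => p.1 ≠ p.2), f p.1 p.2 := by
    rw [prod_filter, ← univ_product_univ, prod_product]
    refine prod_congr rfl fun i _ => ?_
    rw [← prod_filter, filter_ne]
  rw [prod_mul_distrib, hne, ← prod_filter_mul_prod_filter_not _ (fun p => p.1 < p.2),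
    filter_filter, filter_filter]
  congr 1
  · refine prod_congr (ext fun p => ?_) fun _ _ => rfl
    simpa using ne_of_lt
  · refine prod_equiv (Equiv.prodComm ι ι) (fun p => ?_) fun _ _ => rfl
    simp only [mem_filter, mem_univ, true_and, Equiv.prodComm_apply, Prod.fst_swap,
      Prod.snd_swap, not_lt]
    exact ⟨fun h => lt_of_le_of_ne h.2 (Ne.symm h.1), fun h => ⟨h.ne', h.le⟩⟩

theorem Finset.disjoint_image_add_iff {G : Type*} [AddCommGroup G] [DecidableEq G]
    {A B : Finset G} {a b : G} :
    Disjoint (A.image (· + a)) (B.image (· + b)) ↔ b - a ∉ A - B := by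
  simp only [disjoint_left, mem_image, mem_sub, not_exists, not_and, forall_exists_index, and_imp]
  constructor
  · intro h x hx y hy hxy
    exact h x hx rfl y hy (by rw [add_comm y, sub_eq_sub_iff_add_eq_add.mp hxy])
  · rintro h _ x hx rfl y hy hxy
    exact h x hx y hy (sub_eq_sub_iff_add_eq_add.mpr (by rw [← hxy, add_comm]))

theorem Lagrange.sum_prod_div_sub_eq_one {K ι : Type*} [Field K] [DecidableEq ι]
    {s : Finset ι} {v : ι → K} (hv : Set.InjOn v s) (hs : s.Nonempty) :
    ∑ k ∈ s, ∏ j ∈ s.erase k, v j / (v j - v k) = 1 := by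
  have h := congrArg (Polynomial.eval 0) (Lagrange.sum_basis hv hs)
  rw [Polynomial.eval_finsetSum, Polynomial.eval_one] at h
  rw [← h]
  refine sum_congr rfl fun k _ => ?_
  rw [Lagrange.basis, Polynomial.eval_prod]
  refine prod_congr rfl fun j _ => ?_
  simp only [Lagrange.basisDivisor, Polynomial.eval_mul, Polynomial.eval_C, Polynomial.eval_sub,
    Polynomial.eval_X, zero_sub, mul_neg]
  rw [← neg_sub (v k), div_neg, div_eq_inv_mul]

theorem Nat.sum_mul_multinomial_update_pred {α : Type*} [DecidableEq α] {s : Finset α}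
    {a : α → ℕ} {k : α} (hk : k ∈ s) (hak : a k ≠ 0) :
    (∑ i ∈ s, a i) * Nat.multinomial s (Function.update a k (a k - 1))
      = a k * Nat.multinomial s a := by
  set a' := Function.update a k (a k - 1)
  have ha'k : a' k = a k - 1 := Function.update_self ..
  have ha' : ∀ i ∈ s.erase k, a' i = a i := fun i hi =>
    Function.update_of_ne (ne_of_mem_erase hi) ..
  have hsum : ∑ i ∈ s, a' i + 1 = ∑ i ∈ s, a i := by
    rw [← add_sum_erase s a' hk, ← add_sum_erase s a hk, ha'k, sum_congr rfl ha',
      add_right_comm, Nat.sub_add_cancel (Nat.one_le_iff_ne_zero.mpr hak)]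
  have hprod : ∏ i ∈ s, (a i).factorial = a k * ∏ i ∈ s, (a' i).factorial := by
    rw [← mul_prod_erase s _ hk, ← mul_prod_erase s (fun i => (a' i).factorial) hk, ha'k,
      ← mul_assoc, Nat.mul_factorial_pred hak]
    exact congrArg _ (prod_congr rfl fun i hi => by rw [ha' i hi])
  refine Nat.eq_of_mul_eq_mul_left (prod_pos (s := s) fun i _ => (a' i).factorial_pos) ?_
  rw [mul_left_comm, Nat.multinomial_spec, ← mul_assoc, mul_comm _ (a k), ← hprod,
    Nat.multinomial_spec, ← hsum, Nat.factorial_succ]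

theorem Nat.multinomial_eq_sum_update_pred {α : Type*} [DecidableEq α] {s : Finset α}
    (hs : s.Nonempty) {a : α → ℕ} (ha : ∀ k ∈ s, a k ≠ 0) :
    Nat.multinomial s a = ∑ k ∈ s, Nat.multinomial s (Function.update a k (a k - 1)) := by
  obtain ⟨k, hk⟩ := hs
  have hpos : 0 < ∑ i ∈ s, a i :=
    (Nat.pos_of_ne_zero (ha k hk)).trans_le (single_le_sum (fun _ _ => Nat.zero_le _) hk)
  refine Nat.eq_of_mul_eq_mul_left hpos ?_
  rw [mul_sum, sum_congr rfl fun k hk => Nat.sum_mul_multinomial_update_pred hk (ha k hk),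
    ← sum_mul]

namespace MvPolynomial

variable {σ R : Type*} [CommRing R]

theorem IsHomogeneous.coeff_single_eq_eval [DecidableEq σ] {φ : MvPolynomial σ R} {n : ℕ}
    (hφ : φ.IsHomogeneous n) (k : σ) :
    coeff (Finsupp.single k n) φ = eval (Pi.single k 1) φ := by
  rw [eval_eq, Finset.sum_eq_single (Finsupp.single k n)]
  · rw [Finset.prod_eq_one fun i hi => ?_, mul_one]
    rw [Finset.mem_singleton.mp (Finsupp.support_single_subset hi)]
    simp
  · intro ν hν hne
    obtain ⟨i, hi, hik⟩ : ∃ i ∈ ν.support, i ≠ k := by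
      by_contra! h
      have hdeg : ν.degree = n :=
        by_contra fun h' => mem_support_iff.mp hν (hφ.coeff_eq_zero h')
      have hνk : ν.degree = ν k := Finset.sum_eq_single k (fun i hi hik => absurd (h i hi) hik)
        fun hk => Finsupp.notMem_support_iff.mp hk
      exact hne (hdeg ▸ hνk ▸ Finsupp.eq_single_of_degree_le hνk.le)
    rw [Finset.prod_eq_zero hi (by simp [Pi.single_eq_of_ne hik, Finsupp.mem_support_iff.mp hi]),
      mul_zero]
  · intro h
    rw [notMem_support_iff.mp h, zero_mul]

theorem coeff_single_add_mul {P Q : MvPolynomial σ R} {p : ℕ} (hP : P.IsHomogeneous p)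
    {k : σ} (hQ : k ∉ Q.vars) {ν : σ →₀ ℕ} (hν : ν k = 0) :
    coeff (Finsupp.single k p + ν) (P * Q) = coeff (Finsupp.single k p) P * coeff ν Q := by
  classical
  rw [coeff_mul, Finset.sum_eq_single_of_mem (Finsupp.single k p, ν) (by simp)]
  rintro ⟨α, β⟩ hαβ hne
  rw [HasAntidiagonal.mem_antidiagonal] at hαβ
  by_contra h
  have hα : α.degree = p := by_contra fun h' => left_ne_zero_of_mul h (hP.coeff_eq_zero h')
  have hβ : β k = 0 := by
    by_contra h'
    exact hQ ((mem_vars_iff_mem_support k).mpr ⟨β, mem_support_iff.mpr (right_ne_zero_of_mul h),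
      Finsupp.mem_support_iff.mpr h'⟩)
  have hαk : α k = p := by
    simpa [hβ, hν] using DFunLike.congr_fun hαβ k
  have hα' : α = Finsupp.single k p := hαk ▸ Finsupp.eq_single_of_degree_le (by omega)
  subst hα'
  exact hne (by simpa using hαβ)

theorem prod_X_eq_monomial (t : Finset σ) :
    ∏ j ∈ t, (X j : MvPolynomial σ R) = monomial (∑ j ∈ t, Finsupp.single j 1) 1 := by
  rw [monomial_sum_one]
  rfl

theorem isHomogeneous_prod_X_sub_X_pow (t : Finset σ) (k : σ) (a : σ → ℕ) :
    (∏ i ∈ t, (X k - X i) ^ a i : MvPolynomial σ R).IsHomogeneous (∑ i ∈ t, a i) :=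
  IsHomogeneous.prod _ _ _ fun i _ => by
    simpa using ((isHomogeneous_X R k).sub (isHomogeneous_X R i)).pow (a i)

theorem eval_aeval (p : Polynomial R) (L : MvPolynomial σ R) (t : σ → R) :
    eval t (Polynomial.aeval L p) = p.eval (eval t L) := by
  simpa [Polynomial.coe_aeval_eq_eval] using (Polynomial.aeval_algHom_apply (aeval t) L p).symm

theorem totalDegree_aeval_le (p : Polynomial R) (L : MvPolynomial σ R) :
    (Polynomial.aeval L p).totalDegree ≤ p.natDegree * L.totalDegree := by
  rw [Polynomial.aeval_eq_sum_range]
  refine (totalDegree_finsetSum _ _).trans (Finset.sup_le fun i hi => ?_)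
  refine (totalDegree_smul_le _ _).trans ((totalDegree_pow _ _).trans ?_)
  exact Nat.mul_le_mul_right _ (Nat.lt_succ_iff.mp (Finset.mem_range.mp hi))

theorem totalDegree_aeval_sub_pow_lt {p : Polynomial R} (hp : p.Monic) (hp0 : 0 < p.natDegree)
    {L : MvPolynomial σ R} (hL : L.totalDegree ≤ 1) :
    (Polynomial.aeval L p - L ^ p.natDegree).totalDegree < p.natDegree := by
  have h : Polynomial.aeval L p - L ^ p.natDegree = Polynomial.aeval L p.eraseLead := by
    rw [← Polynomial.self_sub_C_mul_X_pow, hp.leadingCoeff, map_one, one_mul, map_sub,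
      Polynomial.aeval_X_pow]
  rw [h]
  calc _ ≤ p.eraseLead.natDegree * L.totalDegree := totalDegree_aeval_le _ _
    _ ≤ (p.natDegree - 1) * 1 := Nat.mul_le_mul (Polynomial.eraseLead_natDegree_le p) hL
    _ < p.natDegree := by omega

theorem totalDegree_le_of_totalDegree_sub_lt {g h : MvPolynomial σ R} {n : ℕ}
    (hh : h.IsHomogeneous n) (hgh : (g - h).totalDegree < n) : g.totalDegree ≤ n := by
  rw [← sub_add_cancel g h]
  exact (totalDegree_add _ _).trans (max_le hgh.le hh.totalDegree_le)

theorem totalDegree_prod_sub_prod_lt {ι : Type*} {s : Finset ι} (hs : s.Nonempty)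
    {g h : ι → MvPolynomial σ R} {c : ι → ℕ} (hh : ∀ i ∈ s, (h i).IsHomogeneous (c i))
    (hgh : ∀ i ∈ s, (g i - h i).totalDegree < c i) :
    (∏ i ∈ s, g i - ∏ i ∈ s, h i).totalDegree < ∑ i ∈ s, c i := by
  induction hs using Finset.Nonempty.cons_induction with
  | singleton i => simpa using hgh i (mem_singleton_self i)
  | cons i s hi hs ih =>
    simp only [mem_cons, forall_eq_or_imp] at hh hgh
    rw [prod_cons, prod_cons, sum_cons]
    have hsplit : g i * ∏ j ∈ s, g j - h i * ∏ j ∈ s, h j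
        = g i * (∏ j ∈ s, g j - ∏ j ∈ s, h j) + (g i - h i) * ∏ j ∈ s, h j := by ring
    rw [hsplit]
    refine (totalDegree_add _ _).trans_lt (max_lt ?_ ?_)
    · exact (totalDegree_mul _ _).trans_lt (Nat.add_lt_add_of_le_of_lt
        (totalDegree_le_of_totalDegree_sub_lt hh.1 hgh.1) (ih hh.2 hgh.2))
    · exact (totalDegree_mul _ _).trans_lt (Nat.add_lt_add_of_lt_of_le hgh.1
        (IsHomogeneous.prod s h c hh.2).totalDegree_le)

theorem exists_eval_ne_zero_of_coeff_prod_ne_zero [Finite σ] [IsDomain R] {ι : Type*}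
    {s : Finset ι} {g h : ι → MvPolynomial σ R} {c : ι → ℕ}
    (hh : ∀ i ∈ s, (h i).IsHomogeneous (c i)) (hgh : ∀ i ∈ s, (g i - h i).totalDegree < c i)
    {μ : σ →₀ ℕ} (hμ : coeff μ (∏ i ∈ s, h i) ≠ 0) (T : σ → Finset R)
    (hT : ∀ k, μ k < #(T k)) :
    ∃ t : σ → R, (∀ k, t k ∈ T k) ∧ ∀ i ∈ s, eval t (g i) ≠ 0 := by
  have hμdeg : μ.degree = ∑ i ∈ s, c i :=
    by_contra fun h' => hμ ((IsHomogeneous.prod s h c hh).coeff_eq_zero h')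
  have hcoeff : coeff μ (∏ i ∈ s, g i) = coeff μ (∏ i ∈ s, h i) := by
    rcases s.eq_empty_or_nonempty with rfl | hs
    · rfl
    rw [← sub_eq_zero, ← coeff_sub]
    apply coeff_eq_zero_of_totalDegree_lt
    rw [← Finsupp.degree_apply, hμdeg]
    exact totalDegree_prod_sub_prod_lt hs hh hgh
  have hdeg : (∏ i ∈ s, g i).totalDegree = μ.degree := by
    refine le_antisymm ?_ (le_totalDegree (mem_support_iff.mpr (hcoeff ▸ hμ)))
    refine hμdeg ▸ (totalDegree_finsetProd _ _).trans (sum_le_sum fun i hi => ?_)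
    exact totalDegree_le_of_totalDegree_sub_lt (hh i hi) (hgh i hi)
  obtain ⟨t, htT, ht⟩ := combinatorial_nullstellensatz_exists_eval_nonzero _ μ
    (hcoeff ▸ hμ) hdeg T hT
  exact ⟨t, htT, fun i hi h0 => ht (by rw [map_prod]; exact prod_eq_zero hi h0)⟩

section Dyson

variable [DecidableEq σ]

noncomputable def dysonFactor (s : Finset σ) (i : σ) : MvPolynomial σ R :=
  ∏ j ∈ s.erase i, (X j - X i)

/-- Dyson's product `∏_{i ≠ j} (1 - x_i / x_j) ^ a_i` over `i, j ∈ s`, cleared of denominators by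
the monomial with exponent `dysonExponent s a`; its coefficient there is Dyson's constant term. -/
noncomputable def dysonProduct (s : Finset σ) (a : σ → ℕ) : MvPolynomial σ R :=
  ∏ i ∈ s, dysonFactor s i ^ a i

noncomputable def dysonExponent (s : Finset σ) (a : σ → ℕ) : σ →₀ ℕ :=
  ∑ i ∈ s, a i • ∑ j ∈ s.erase i, Finsupp.single j 1

theorem dysonProduct_eq_mul_of_eq_zero {s : Finset σ} {a : σ → ℕ} {k : σ} (hk : k ∈ s)
    (hak : a k = 0) :
    dysonProduct s a = (∏ i ∈ s.erase k, (X k - X i) ^ a i)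
      * (dysonProduct (s.erase k) a : MvPolynomial σ R) := by
  rw [dysonProduct, ← mul_prod_erase s _ hk, hak, pow_zero, one_mul, dysonProduct,
    ← prod_mul_distrib]
  refine prod_congr rfl fun i hi => ?_
  rw [← mul_pow, dysonFactor, dysonFactor, ← mul_prod_erase (s.erase i) _
    (mem_erase.mpr ⟨(ne_of_mem_erase hi).symm, hk⟩), erase_right_comm]

theorem dysonExponent_eq_add_of_eq_zero {s : Finset σ} {a : σ → ℕ} {k : σ} (hk : k ∈ s)
    (hak : a k = 0) :
    dysonExponent s a
      = Finsupp.single k (∑ i ∈ s.erase k, a i) + dysonExponent (s.erase k) a := by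
  rw [dysonExponent, ← add_sum_erase s _ hk, hak, zero_smul, zero_add, dysonExponent,
    ← Finsupp.smul_single_one, sum_smul, ← sum_add_distrib]
  refine sum_congr rfl fun i hi => ?_
  rw [← smul_add, ← add_sum_erase (s.erase i) _ (mem_erase.mpr ⟨(ne_of_mem_erase hi).symm, hk⟩),
    erase_right_comm]

theorem dysonExponent_apply_of_notMem {s : Finset σ} (a : σ → ℕ) {k : σ} (hk : k ∉ s) :
    dysonExponent s a k = 0 := by
  simp [dysonExponent, Finsupp.single_apply, hk]

theorem dysonProduct_mem_supported [Nontrivial R] (s : Finset σ) (a : σ → ℕ) :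
    (dysonProduct s a : MvPolynomial σ R) ∈ supported R (s : Set σ) :=
  Subalgebra.prod_mem _ fun _ hi => Subalgebra.pow_mem _ (Subalgebra.prod_mem _ fun _ hj =>
    Subalgebra.sub_mem _ (X_mem_supported.mpr (mem_of_mem_erase hj)) (X_mem_supported.mpr hi)) _

theorem coeff_single_prod_X_sub_X_pow {t : Finset σ} {k : σ} (hk : k ∉ t) (a : σ → ℕ) :
    coeff (Finsupp.single k (∑ i ∈ t, a i))
      (∏ i ∈ t, (X k - X i) ^ a i : MvPolynomial σ R) = 1 := by
  rw [(isHomogeneous_prod_X_sub_X_pow t k a).coeff_single_eq_eval]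
  simp only [map_prod, map_pow, map_sub, eval_X]
  exact prod_eq_one fun i hi => by
    rw [Pi.single_eq_same, Pi.single_eq_of_ne (ne_of_mem_of_not_mem hi hk), sub_zero, one_pow]

theorem coeff_dysonProduct_of_eq_zero [Nontrivial R] {s : Finset σ} {a : σ → ℕ} {k : σ}
    (hk : k ∈ s) (hak : a k = 0) :
    coeff (dysonExponent s a) (dysonProduct s a : MvPolynomial σ R)
      = coeff (dysonExponent (s.erase k) a) (dysonProduct (s.erase k) a) := by
  have hvars : k ∉ (dysonProduct (s.erase k) a : MvPolynomial σ R).vars := fun h =>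
    notMem_erase k s (mem_supported.mp (dysonProduct_mem_supported _ a) h)
  rw [dysonProduct_eq_mul_of_eq_zero hk hak, dysonExponent_eq_add_of_eq_zero hk hak,
    coeff_single_add_mul (isHomogeneous_prod_X_sub_X_pow _ k a) hvars
      (dysonExponent_apply_of_notMem a (notMem_erase k s)),
    coeff_single_prod_X_sub_X_pow (notMem_erase k s), one_mul]

theorem prod_dysonFactor_eq_sum [IsDomain R] {s : Finset σ} (hs : s.Nonempty) :
    ∏ l ∈ s, (dysonFactor s l : MvPolynomial σ R)
      = ∑ k ∈ s, (∏ j ∈ s.erase k, X j) * ∏ l ∈ s.erase k, dysonFactor s l := by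
  set φ := algebraMap (MvPolynomial σ R) (FractionRing (MvPolynomial σ R))
  have hφ : Function.Injective φ := IsFractionRing.injective _ _
  have hv : Set.InjOn (fun j => φ (X j)) s := (hφ.comp (X_injective (R := R))).injOn
  have hC : ∀ k, φ (dysonFactor s k) = ∏ j ∈ s.erase k, (φ (X j) - φ (X k)) := by
    simp [dysonFactor]
  have hC0 : ∀ k ∈ s, φ (dysonFactor s k) ≠ 0 := fun k hk => by
    rw [hC k]
    exact prod_ne_zero_iff.mpr fun j hj => sub_ne_zero.mpr fun h =>
      ne_of_mem_erase hj (hv (mem_of_mem_erase hj) hk h)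
  apply hφ
  rw [map_prod, ← one_mul (∏ l ∈ s, φ _), ← Lagrange.sum_prod_div_sub_eq_one hv hs, sum_mul,
    map_sum]
  refine sum_congr rfl fun k hk => ?_
  rw [prod_div_distrib, ← hC k, ← mul_prod_erase s _ hk, ← mul_assoc,
    div_mul_cancel₀ _ (hC0 k hk), map_mul, map_prod, map_prod]

theorem dysonProduct_update_pred {s : Finset σ} {a : σ → ℕ} {k : σ} (hk : k ∈ s)
    (ha : ∀ i ∈ s, a i ≠ 0) :
    dysonProduct s (Function.update a k (a k - 1))
      = (∏ i ∈ s, dysonFactor s i ^ (a i - 1))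
        * ∏ i ∈ s.erase k, (dysonFactor s i : MvPolynomial σ R) := by
  rw [dysonProduct, ← mul_prod_erase s _ hk,
    ← mul_prod_erase s (fun i => dysonFactor s i ^ (a i - 1)) hk, Function.update_self,
    mul_assoc, ← prod_mul_distrib]
  refine congrArg _ (prod_congr rfl fun i hi => ?_)
  rw [Function.update_of_ne (ne_of_mem_erase hi), ← pow_succ,
    Nat.sub_add_cancel (Nat.one_le_iff_ne_zero.mpr (ha i (mem_of_mem_erase hi)))]

theorem dysonProduct_eq_sum [IsDomain R] {s : Finset σ} (hs : s.Nonempty) {a : σ → ℕ}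
    (ha : ∀ i ∈ s, a i ≠ 0) :
    dysonProduct s a = ∑ k ∈ s, (∏ j ∈ s.erase k, X j)
      * (dysonProduct s (Function.update a k (a k - 1)) : MvPolynomial σ R) := by
  have hsplit : dysonProduct s a = (∏ i ∈ s, dysonFactor s i ^ (a i - 1))
      * ∏ i ∈ s, (dysonFactor s i : MvPolynomial σ R) := by
    rw [dysonProduct, ← prod_mul_distrib]
    exact prod_congr rfl fun i hi => by
      rw [← pow_succ, Nat.sub_add_cancel (Nat.one_le_iff_ne_zero.mpr (ha i hi))]
  rw [hsplit, prod_dysonFactor_eq_sum hs, mul_sum]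
  refine sum_congr rfl fun k hk => ?_
  rw [dysonProduct_update_pred hk ha]
  ring

theorem dysonExponent_eq_add_of_ne_zero {s : Finset σ} {a : σ → ℕ} {k : σ} (hk : k ∈ s)
    (hak : a k ≠ 0) :
    dysonExponent s a = ∑ j ∈ s.erase k, Finsupp.single j 1
      + dysonExponent s (Function.update a k (a k - 1)) := by
  rw [dysonExponent, dysonExponent, ← add_sum_erase s _ hk, ← add_sum_erase s _ hk,
    Function.update_self, ← add_assoc, ← succ_nsmul',
    Nat.sub_add_cancel (Nat.one_le_iff_ne_zero.mpr hak)]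
  refine congrArg _ (sum_congr rfl fun i hi => ?_)
  rw [Function.update_of_ne (ne_of_mem_erase hi)]

theorem coeff_dysonExponent_dysonProduct [IsDomain R] (s : Finset σ) (a : σ → ℕ) :
    coeff (dysonExponent s a) (dysonProduct s a : MvPolynomial σ R) = Nat.multinomial s a := by
  induction hn : ∑ i ∈ s, a i + #s using Nat.strong_induction_on generalizing s a with
  | _ n ih =>
  rcases s.eq_empty_or_nonempty with rfl | hs
  · simp [dysonExponent, dysonProduct]
  by_cases h0 : ∃ k ∈ s, a k = 0
  · obtain ⟨k, hk, hak⟩ := h0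
    have hlt : ∑ i ∈ s.erase k, a i + #(s.erase k) < n := by
      rw [← hn, ← add_sum_erase s a hk, hak, zero_add, ← card_erase_add_one hk]
      omega
    have hmultinomial : Nat.multinomial (s.erase k) a = Nat.multinomial s a :=
      Nat.multinomial_congr_of_sdiff (erase_subset k s)
        (fun i hi => by rw [sdiff_erase_self hk, mem_singleton] at hi; rwa [hi]) fun _ _ => rfl
    rw [coeff_dysonProduct_of_eq_zero hk hak, ih _ hlt _ _ rfl, hmultinomial]
  · push Not at h0
    rw [dysonProduct_eq_sum hs h0, coeff_sum, Nat.multinomial_eq_sum_update_pred hs h0,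
      Nat.cast_sum]
    refine sum_congr rfl fun k hk => ?_
    have hlt : ∑ i ∈ s, Function.update a k (a k - 1) i + #s < n := by
      rw [sum_update_of_mem hk, sdiff_singleton_eq_erase, ← hn, ← add_sum_erase s a hk]
      have := h0 k hk
      omega
    rw [dysonExponent_eq_add_of_ne_zero hk (h0 k hk), prod_X_eq_monomial, coeff_monomial_mul,
      one_mul, ih _ hlt _ _ rfl]

end Dyson

section EqualExponents

variable {ι : Type*} [Fintype ι] [LinearOrder ι]

theorem dysonProduct_univ_const (d : ℕ) :
    dysonProduct univ (fun _ => d)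
      = (-1) ^ (d * #(univ.filter (fun p : ι × ι => p.1 < p.2)))
        * ∏ p ∈ univ.filter (fun p : ι × ι => p.1 < p.2),
            (X p.2 - X p.1 : MvPolynomial ι R) ^ (2 * d) := by
  simp only [dysonProduct, dysonFactor, ← prod_pow]
  rw [prod_prod_erase_eq_prod_lt (fun i j => (X j - X i : MvPolynomial ι R) ^ d), pow_mul,
    ← prod_const, ← prod_mul_distrib]
  refine prod_congr rfl fun p _ => ?_
  rw [← neg_sub (X p.2), neg_pow, two_mul, pow_add]
  ring

theorem dysonExponent_univ_const_apply (d : ℕ) (k : ι) :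
    dysonExponent univ (fun _ => d) k = (Fintype.card ι - 1) * d := by
  simp [dysonExponent, Finsupp.single_apply, sum_ite, filter_ne, card_erase_of_mem]

theorem coeff_prod_X_sub_X_pow_ne_zero [IsDomain R] {d : ℕ}
    (hd : (Nat.multinomial univ (fun _ : ι => d) : R) ≠ 0) :
    coeff (dysonExponent univ (fun _ => d))
      (∏ p ∈ univ.filter (fun p : ι × ι => p.1 < p.2),
        (X p.2 - X p.1 : MvPolynomial ι R) ^ (2 * d)) ≠ 0 := by
  intro h
  apply hd
  rw [← coeff_dysonExponent_dysonProduct, dysonProduct_univ_const]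
  rcases neg_one_pow_eq_or (MvPolynomial ι R) (d * #(univ.filter (fun p : ι × ι => p.1 < p.2)))
    with h1 | h1 <;> simp [h1, h]

end EqualExponents

end MvPolynomial

namespace Lagrange

variable {R : Type*} [CommRing R]

noncomputable def paddedNodal (s : Finset R) (n : ℕ) : Polynomial R :=
  nodal s id * Polynomial.X ^ (n - #s)

theorem paddedNodal_monic (s : Finset R) (n : ℕ) : (paddedNodal s n).Monic :=
  nodal_monic.mul (Polynomial.monic_X_pow _)

theorem natDegree_paddedNodal [Nontrivial R] {s : Finset R} {n : ℕ} (hs : #s ≤ n) :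
    (paddedNodal s n).natDegree = n := by
  rw [paddedNodal, nodal_monic.natDegree_mul (Polynomial.monic_X_pow _), natDegree_nodal,
    Polynomial.natDegree_X_pow]
  omega

theorem eval_paddedNodal_of_mem {s : Finset R} {a : R} (ha : a ∈ s) (n : ℕ) :
    (paddedNodal s n).eval a = 0 := by
  rw [paddedNodal, Polynomial.eval_mul, eval_nodal]
  exact mul_eq_zero_of_left (prod_eq_zero ha (sub_self a)) _

end Lagrange

open MvPolynomial in
theorem exists_mem_forall_sub_notMem {ι R : Type*} [Fintype ι] [LinearOrder ι] [CommRing R]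
    [IsDomain R] {d : ℕ} (hd : 0 < d) (hchar : (Nat.multinomial univ (fun _ : ι => d) : R) ≠ 0)
    (D : ι → ι → Finset R) (hD : ∀ i j, i < j → #(D i j) ≤ 2 * d)
    (T : ι → Finset R) (hT : ∀ i, (Fintype.card ι - 1) * d < #(T i)) :
    ∃ t : ι → R, (∀ i, t i ∈ T i) ∧ ∀ i j, i < j → t j - t i ∉ D i j := by
  have hL : ∀ p : ι × ι, (X p.2 - X p.1 : MvPolynomial ι R).IsHomogeneous 1 := fun p =>
    (isHomogeneous_X R p.2).sub (isHomogeneous_X R p.1)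
  have hleading : ∀ p ∈ univ.filter (fun p : ι × ι => p.1 < p.2),
      (Polynomial.aeval (X p.2 - X p.1 : MvPolynomial ι R)
        (Lagrange.paddedNodal (D p.1 p.2) (2 * d)) - (X p.2 - X p.1) ^ (2 * d)).totalDegree
        < 2 * d := by
    intro p hp
    have hdeg := Lagrange.natDegree_paddedNodal (hD p.1 p.2 (mem_filter.mp hp).2)
    have := totalDegree_aeval_sub_pow_lt (Lagrange.paddedNodal_monic _ _)
      (by rw [hdeg]; omega) (hL p).totalDegree_le
    rwa [hdeg] at this
  obtain ⟨t, htT, ht⟩ := exists_eval_ne_zero_of_coeff_prod_ne_zero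
    (fun p _ => by simpa using (hL p).pow (2 * d)) hleading
    (coeff_prod_X_sub_X_pow_ne_zero hchar) T
    fun k => by rw [dysonExponent_univ_const_apply]; exact hT k
  refine ⟨t, htT, fun i j hij hmem => ht (i, j) (by simpa using hij) ?_⟩
  rw [eval_aeval]
  simpa using Lagrange.eval_paddedNodal_of_mem hmem (2 * d)

theorem stmt_2_general (F : Type) [Field F] [DecidableEq F] (m d : ℕ) (hd : 0 < d)
    (hchar : (((m * d).factorial / d.factorial ^ m : ℕ) : F) ≠ 0)
    (X T : Fin m → Finset F)
    (hX : ∀ i j : Fin m, i < j → (X i - X j).card ≤ 2 * d)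
    (hT : ∀ i, (m - 1) * d + 1 ≤ (T i).card) :
    ∃ t : Fin m → F, (∀ i, t i ∈ T i) ∧
      ∀ i j : Fin m, i ≠ j →
        Disjoint ((X i).image (· + t i)) ((X j).image (· + t j)) := by
  have hmultinomial :
      Nat.multinomial univ (fun _ : Fin m => d) = (m * d).factorial / d.factorial ^ m := by
    simp [Nat.multinomial]
  obtain ⟨t, htT, ht⟩ := exists_mem_forall_sub_notMem hd (hmultinomial ▸ hchar)
    (fun i j => X i - X j) hX T fun i => by simpa using hT i
  refine ⟨t, htT, fun i j hij => ?_⟩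
  rcases hij.lt_or_gt with h | h
  · exact disjoint_image_add_iff.mpr (ht i j h)
  · exact (disjoint_image_add_iff.mpr (ht j i h)).symm

/-- (Karasev–Petrov) Let `F` be a field and `m, d` positive integers such that
`(md)!/(d!)^m ≠ 0` in `F`. Let `X₁,…,Xₘ` and `T₁,…,Tₘ` be finite subsets of `F` with
`|Xᵢ - Xⱼ| ≤ 2d` for `i < j` and `|Tᵢ| ≥ (m-1)d + 1`. Then there are representatives
`tᵢ ∈ Tᵢ` such that the translates `Xᵢ + tᵢ` are pairwise disjoint. -/
theorem stmt_2 (F : Type) [Field F] [DecidableEq F] (m d : ℕ) (hm : 0 < m) (hd : 0 < d)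
    (hchar : (((m * d).factorial / d.factorial ^ m : ℕ) : F) ≠ 0)
    (X T : Fin m → Finset F)
    (hX : ∀ i j : Fin m, i < j → (X i - X j).card ≤ 2 * d)
    (hT : ∀ i, (m - 1) * d + 1 ≤ (T i).card) :
    ∃ t : Fin m → F, (∀ i, t i ∈ T i) ∧
      ∀ i j : Fin m, i ≠ j →
        Disjoint ((X i).image (· + t i)) ((X j).image (· + t j)) :=
  stmt_2_general F m d hd hchar X T hX hT
end

section
/- A cyclic $(v,k,\lambda)$-design has at most $\lambda \sigma_0(k)$ short block orbits, where $\sigma_0(k)$ is the number of divisors of $k$; in particular it has at most $2\lambda\sqrt{k}$ short orbits. -/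
set_option linter.unusedSectionVars false


open Finset

/-- The orbit (as a finset of indices) of a block index under the translation
action of `ZMod v`. -/
def orbF (v : ℕ) [NeZero v] {ι : Type} [DecidableEq ι] [AddAction (ZMod v) ι] (b : ι) :
    Finset ι :=
  Finset.univ.image (fun t : ZMod v => t +ᵥ b)

private lemma exists_per (v : ℕ) [NeZero v] {ι : Type} [DecidableEq ι]
    [AddAction (ZMod v) ι] (b : ι) : ∃ n, 0 < n ∧ ((n : ℕ) : ZMod v) +ᵥ b = b :=
  ⟨v, Nat.pos_of_ne_zero (NeZero.ne v), by simp [ZMod.natCast_self]⟩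

/-- minimal period of `b` under translation. -/
def per (v : ℕ) [NeZero v] {ι : Type} [DecidableEq ι] [AddAction (ZMod v) ι] (b : ι) : ℕ :=
  Nat.find (exists_per v b)

/-- the stabilizer of `b` as a finset -/
def stabF (v : ℕ) [NeZero v] {ι : Type} [DecidableEq ι] [AddAction (ZMod v) ι] (b : ι) :
    Finset (ZMod v) := Finset.univ.filter (fun t => t +ᵥ b = b)

section aux
variable {v : ℕ} [NeZero v] {ι : Type} [DecidableEq ι] [AddAction (ZMod v) ι]

lemma per_pos (b : ι) : 0 < per v b := (Nat.find_spec (exists_per v b)).1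

lemma per_vadd (b : ι) : ((per v b : ℕ) : ZMod v) +ᵥ b = b := (Nat.find_spec (exists_per v b)).2

lemma per_min (b : ι) {n : ℕ} (h0 : 0 < n) (hn : n < per v b) :
    ¬(((n : ℕ) : ZMod v) +ᵥ b = b) := fun h => Nat.find_min (exists_per v b) hn ⟨h0, h⟩

lemma mul_per_vadd (b : ι) (q : ℕ) : ((per v b * q : ℕ) : ZMod v) +ᵥ b = b := by
  induction q with
  | zero => simp
  | succ q ih =>
      have : (per v b * (q + 1) : ℕ) = per v b * q + per v b := by ring
      rw [this, Nat.cast_add, add_vadd, per_vadd, ih]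

lemma natCast_vadd_eq_iff (b : ι) (n : ℕ) :
    ((n : ℕ) : ZMod v) +ᵥ b = b ↔ per v b ∣ n := by
  constructor
  · intro h
    have hmod : ((n % per v b : ℕ) : ZMod v) +ᵥ b = b := by
      conv at h => rw [← Nat.mod_add_div n (per v b)]
      rw [Nat.cast_add, add_vadd, mul_per_vadd] at h
      exact h
    by_contra hd
    have hpos : 0 < n % per v b := Nat.pos_of_ne_zero (fun h0 => hd (Nat.dvd_of_mod_eq_zero h0))
    exact per_min b hpos (Nat.mod_lt _ (per_pos b)) hmod
  · rintro ⟨q, rfl⟩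
    exact mul_per_vadd b q

lemma per_dvd (b : ι) : per v b ∣ v := by
  rw [← natCast_vadd_eq_iff]
  simp [ZMod.natCast_self]

lemma orbF_eq (b : ι) :
    orbF v b = (Finset.range (per v b)).image (fun n : ℕ => ((n : ℕ) : ZMod v) +ᵥ b) := by
  ext x
  simp only [orbF, mem_image, mem_univ, true_and, mem_range]
  constructor
  · rintro ⟨t, rfl⟩
    refine ⟨t.val % per v b, Nat.mod_lt _ (per_pos b), ?_⟩
    conv_rhs => rw [← ZMod.natCast_zmod_val t, ← Nat.mod_add_div t.val (per v b)]
    rw [Nat.cast_add, add_vadd, mul_per_vadd]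
  · rintro ⟨n, _, rfl⟩
    exact ⟨(n : ZMod v), rfl⟩

lemma card_orbF (b : ι) : (orbF v b).card = per v b := by
  rw [orbF_eq]
  rw [Finset.card_image_of_injOn, Finset.card_range]
  intro m hm n hn hmn
  simp only [Finset.coe_range, Set.mem_Iio] at hm hn
  have key : ∀ m n : ℕ, m ≤ n → n < per v b →
      ((m : ℕ) : ZMod v) +ᵥ b = ((n : ℕ) : ZMod v) +ᵥ b → n - m = 0 := by
    intro m n h hn hmn
    by_contra hne
    have hsub : ((n - m : ℕ) : ZMod v) +ᵥ b = b := by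
      have h1 : ((n - m : ℕ) : ZMod v) +ᵥ ((((m:ℕ)) : ZMod v) +ᵥ b) = ((n : ℕ) : ZMod v) +ᵥ b := by
        rw [← add_vadd, ← Nat.cast_add, Nat.sub_add_cancel h]
      rw [hmn, ← add_vadd, add_comm, add_vadd] at h1
      exact vadd_left_cancel _ h1
    exact per_min b (n := n - m) (by omega) (by omega) hsub
  rcases le_total m n with h | h
  · have := key m n h hn hmn
    omega
  · have := key n m h hm hmn.symm
    omega

lemma mem_stabF {b : ι} {t : ZMod v} : t ∈ stabF v b ↔ t +ᵥ b = b := by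
  simp [stabF]

lemma stabF_eq (b : ι) :
    stabF v b = (Finset.range (v / per v b)).image (fun j : ℕ => ((per v b * j : ℕ) : ZMod v)) := by
  have hv : 0 < v := Nat.pos_of_ne_zero (NeZero.ne v)
  have hpv := per_dvd (v := v) b
  ext t
  simp only [mem_stabF, mem_image, mem_range]
  constructor
  · intro ht
    have h0 : ((t.val : ℕ) : ZMod v) +ᵥ b = b := by rw [ZMod.natCast_zmod_val]; exact ht
    obtain ⟨j, hj⟩ := (natCast_vadd_eq_iff b t.val).mp h0
    refine ⟨j, ?_, by rw [← hj, ZMod.natCast_zmod_val]⟩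
    have h1 : per v b * j < v := by rw [← hj]; exact ZMod.val_lt t
    have h2 : v = per v b * (v / per v b) := (Nat.mul_div_cancel' hpv).symm
    have hp := per_pos (v := v) b
    by_contra hge
    push_neg at hge
    have : per v b * (v / per v b) ≤ per v b * j := Nat.mul_le_mul_left _ hge
    omega
  · rintro ⟨j, hj, rfl⟩
    exact mul_per_vadd b j

lemma card_stabF (b : ι) : (stabF v b).card = v / per v b := by
  have hv : 0 < v := Nat.pos_of_ne_zero (NeZero.ne v)
  have hpv := per_dvd (v := v) b
  have hp := per_pos (v := v) b
  have h2 : v = per v b * (v / per v b) := (Nat.mul_div_cancel' hpv).symm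
  rw [stabF_eq, Finset.card_image_of_injOn, Finset.card_range]
  intro m hm n hn hmn
  simp only [Finset.coe_range, Set.mem_Iio] at hm hn
  have hm' : per v b * m < v := by nlinarith
  have hn' : per v b * n < v := by nlinarith
  have heq : (per v b * m) = (per v b * n) := by
    have := congrArg ZMod.val hmn
    rwa [ZMod.val_cast_of_lt hm', ZMod.val_cast_of_lt hn'] at this
  exact Nat.eq_of_mul_eq_mul_left hp heq

lemma orbF_vadd (t : ZMod v) (b : ι) : orbF v (t +ᵥ b) = orbF v b := by
  apply Finset.Subset.antisymm
  · intro x hx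
    simp only [orbF, mem_image, mem_univ, true_and] at hx ⊢
    obtain ⟨u, rfl⟩ := hx
    exact ⟨u + t, by rw [add_vadd]⟩
  · intro x hx
    simp only [orbF, mem_image, mem_univ, true_and] at hx ⊢
    obtain ⟨u, rfl⟩ := hx
    exact ⟨u - t, by rw [← add_vadd, sub_add_cancel]⟩

lemma stabF_card_dvd_block (ℬ : ι → Finset (ZMod v))
    (hequiv : ∀ (t : ZMod v) (b : ι), ℬ (t +ᵥ b) = (ℬ b).image (· + t)) (b : ι) :
    (stabF v b).card ∣ (ℬ b).card := by
  classical
  -- the block is invariant under the stabilizer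
  have hinv : ∀ t ∈ stabF v b, ∀ x ∈ ℬ b, x + t ∈ ℬ b := by
    intro t ht x hx
    have h1 : (ℬ b).image (· + t) = ℬ b := by
      rw [← hequiv t b, mem_stabF.mp ht]
    rw [← h1]
    exact Finset.mem_image_of_mem _ hx
  -- translating the stabilizer by its elements fixes it
  have htrans : ∀ t ∈ stabF v b, (stabF v b).image (t + ·) = stabF v b := by
    intro t ht
    apply Finset.eq_of_subset_of_card_le
    · intro y hy
      simp only [mem_image] at hy
      obtain ⟨s, hs, rfl⟩ := hy
      rw [mem_stabF, add_vadd, mem_stabF.mp hs, mem_stabF.mp ht]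
    · rw [Finset.card_image_of_injective _ (add_right_injective t)]
  set f : ZMod v → Finset (ZMod v) := fun x => (stabF v b).image (x + ·) with hf
  have hmemf : ∀ x : ZMod v, x ∈ f x := by
    intro x
    simp only [hf, mem_image]
    exact ⟨0, mem_stabF.mpr (zero_vadd _ _), by simp⟩
  have hshift : ∀ x : ZMod v, ∀ t ∈ stabF v b, f (x + t) = f x := by
    intro x t ht
    simp only [hf]
    conv_rhs => rw [← htrans t ht]
    rw [Finset.image_image]
    apply Finset.image_congr
    intro s _
    simp [add_assoc]
  have hfiber : ∀ x ∈ ℬ b, (ℬ b).filter (fun y => f y = f x) = f x := by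
    intro x hx
    ext y
    simp only [mem_filter]
    constructor
    · rintro ⟨hy, hfy⟩
      rw [← hfy]
      exact hmemf y
    · intro hy
      have hy' := hy
      simp only [hf, mem_image] at hy'
      obtain ⟨t, ht, rfl⟩ := hy'
      refine ⟨by simpa [add_comm] using hinv t ht x hx, hshift x t ht⟩
  have hcardf : ∀ x : ZMod v, (f x).card = (stabF v b).card := by
    intro x
    simp only [hf]
    exact Finset.card_image_of_injective _ (add_right_injective x)
  have hsum : (ℬ b).card = ∑ c ∈ (ℬ b).image f, ((ℬ b).filter (fun y => f y = c)).card :=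
    Finset.card_eq_sum_card_fiberwise (fun x hx => Finset.mem_image_of_mem f hx)
  rw [hsum]
  refine Dvd.dvd.trans (dvd_refl _) ?_
  apply Finset.dvd_sum
  intro c hc
  simp only [mem_image] at hc
  obtain ⟨x, hx, rfl⟩ := hc
  rw [hfiber x hx, hcardf x]

end aux

lemma card_divisors_le_two_mul_sqrt (k : ℕ) : k.divisors.card ≤ 2 * Nat.sqrt k := by
  rcases eq_or_ne k 0 with rfl | hk
  · simp
  have hkpos : 0 < k := Nat.pos_of_ne_zero hk
  have hmaps : ∀ d ∈ k.divisors, min d (k / d) ∈ Finset.Icc 1 (Nat.sqrt k) := by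
    intro d hd
    rw [Nat.mem_divisors] at hd
    have hdpos : 0 < d := Nat.pos_of_dvd_of_pos hd.1 hkpos
    have hquotpos : 0 < k / d := Nat.div_pos (Nat.le_of_dvd hkpos hd.1) hdpos
    rw [Finset.mem_Icc]
    refine ⟨le_min hdpos hquotpos, ?_⟩
    rw [Nat.le_sqrt]
    calc min d (k / d) * min d (k / d) ≤ d * (k / d) :=
          Nat.mul_le_mul (min_le_left _ _) (min_le_right _ _)
      _ = k := Nat.mul_div_cancel' hd.1
  have hfib : ∀ m ∈ Finset.Icc 1 (Nat.sqrt k),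
      (k.divisors.filter (fun d => min d (k / d) = m)).card ≤ 2 := by
    intro m _
    have hsub : k.divisors.filter (fun d => min d (k / d) = m) ⊆ ({m, k / m} : Finset ℕ) := by
      intro d hd
      rw [Finset.mem_filter, Nat.mem_divisors] at hd
      obtain ⟨⟨hdvd, _⟩, hmin⟩ := hd
      rcases le_total d (k / d) with h | h
      · rw [min_eq_left h] at hmin
        simp [hmin]
      · rw [min_eq_right h] at hmin
        have : d = k / m := by rw [← hmin, Nat.div_div_self hdvd hk]
        simp [this]
    calc (k.divisors.filter (fun d => min d (k / d) = m)).card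
        ≤ ({m, k / m} : Finset ℕ).card := Finset.card_le_card hsub
      _ ≤ 2 := (Finset.card_insert_le _ _).trans (by simp)
  calc k.divisors.card ≤ 2 * (Finset.Icc 1 (Nat.sqrt k)).card :=
        Finset.card_le_mul_card_image_of_maps_to hmaps 2 hfib
    _ = 2 * Nat.sqrt k := by rw [Nat.card_Icc]; omega

/-- A cyclic `(v,k,λ)`-design has at most `λ·σ₀(k)` short block orbits, where `σ₀(k)`
is the number of divisors of `k`; in particular it has at most `2λ√k` short orbits. -/
theorem stmt_6 (v k lam : ℕ) [NeZero v] (hlam : 1 ≤ lam)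
    (ι : Type) [Fintype ι] [DecidableEq ι] [AddAction (ZMod v) ι]
    (ℬ : ι → Finset (ZMod v))
    (hcard : ∀ b, (ℬ b).card = k)
    (hpair : ∀ x y : ZMod v, x ≠ y →
      (Finset.univ.filter (fun b => x ∈ ℬ b ∧ y ∈ ℬ b)).card = lam)
    (hequiv : ∀ (t : ZMod v) (b : ι), ℬ (t +ᵥ b) = (ℬ b).image (· + t)) :
    ((Finset.univ.image (orbF v (ι := ι))).filter (fun O => O.card < v)).card
        ≤ lam * k.divisors.card ∧
      ((((Finset.univ.image (orbF v (ι := ι))).filter (fun O => O.card < v)).card : ℝ)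
        ≤ 2 * lam * Real.sqrt k) := by
  classical
  have hv : 0 < v := Nat.pos_of_ne_zero (NeZero.ne v)
  have key : ((Finset.univ.image (orbF v (ι := ι))).filter (fun O => O.card < v)).card
      ≤ lam * k.divisors.card := by
    rcases Nat.lt_or_ge v 2 with hv2 | hv2
    · have hempty : (Finset.univ.image (orbF v (ι := ι))).filter (fun O => O.card < v) = ∅ := by
        rw [Finset.filter_eq_empty_iff]
        intro O hO
        obtain ⟨b, -, rfl⟩ := Finset.mem_image.mp hO
        have hb : b ∈ orbF v b := by
          simp only [orbF, mem_image, mem_univ, true_and]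
          exact ⟨0, zero_vadd _ _⟩
        have h1 : 1 ≤ (orbF v b).card := Finset.card_pos.mpr ⟨b, hb⟩
        omega
      simp [hempty]
    · have hfact : Fact (1 < v) := ⟨hv2⟩
      have hk : k ≠ 0 := by
        intro h0
        have h01 : (0 : ZMod v) ≠ 1 := zero_ne_one
        have hlp := hpair 0 1 h01
        have hne : (univ.filter (fun b => (0:ZMod v) ∈ ℬ b ∧ (1:ZMod v) ∈ ℬ b)).Nonempty := by
          rw [← Finset.card_pos, hlp]; omega
        obtain ⟨b, hb⟩ := hne
        rw [Finset.mem_filter] at hb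
        have hbe : ℬ b = ∅ := Finset.card_eq_zero.mp (by rw [hcard b, h0])
        rw [hbe] at hb
        simp at hb
      have hkpos : 1 ≤ k := Nat.one_le_iff_ne_zero.mpr hk
      apply Finset.card_le_mul_card_image_of_maps_to
        (f := fun O : Finset ι => v / O.card) (t := k.divisors)
      · intro O hO
        rw [Finset.mem_filter] at hO
        obtain ⟨hOim, hOlt⟩ := hO
        obtain ⟨b, -, rfl⟩ := Finset.mem_image.mp hOim
        rw [Nat.mem_divisors]
        refine ⟨?_, hk⟩
        rw [card_orbF]
        have h1 := stabF_card_dvd_block ℬ hequiv b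
        rwa [card_stabF, hcard] at h1
      · intro d hd
        set s := (Finset.univ.image (orbF v (ι := ι))).filter (fun O => O.card < v) with hs
        by_cases hne : (s.filter (fun O => v / O.card = d)).Nonempty
        · -- structural facts about `d` from a witness
          obtain ⟨O₀, hO₀⟩ := hne
          rw [Finset.mem_filter, hs, Finset.mem_filter] at hO₀
          obtain ⟨⟨hO₀im, hO₀lt⟩, hO₀d⟩ := hO₀
          obtain ⟨b₀, -, rfl⟩ := Finset.mem_image.mp hO₀im
          rw [card_orbF] at hO₀lt hO₀d
          have hpdvd := per_dvd (v := v) b₀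
          have hppos := per_pos (v := v) b₀
          have hvd : v = per v b₀ * d := by rw [← hO₀d, Nat.mul_div_cancel' hpdvd]
          have hd2 : 2 ≤ d := by
            rcases Nat.lt_or_ge d 2 with h | h
            · interval_cases d <;> omega
            · exact h
          obtain ⟨ℓ, hℓ⟩ : ∃ ℓ, ℓ = v / d := ⟨_, rfl⟩
          have hℓp : ℓ = per v b₀ := by
            rw [hℓ]
            conv_lhs => rw [hvd]
            exact Nat.mul_div_cancel _ (by omega)
          have hℓpos : 1 ≤ ℓ := by omega
          have hℓlt : ℓ < v := by
            rw [hvd, ← hℓp]; nlinarith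
          have hne0 : (0 : ZMod v) ≠ ((ℓ : ℕ) : ZMod v) := by
            intro h
            have : v ∣ ℓ := (ZMod.natCast_eq_zero_iff ℓ v).mp h.symm
            have := Nat.le_of_dvd (by omega) this
            omega
          have hsurj : Set.SurjOn (orbF v)
              (↑(univ.filter (fun b => (0:ZMod v) ∈ ℬ b ∧ ((ℓ : ℕ) : ZMod v) ∈ ℬ b)) : Set ι)
              (↑(s.filter (fun O => v / O.card = d)) : Set (Finset ι)) := by
            intro O hO
            rw [Finset.mem_coe, Finset.mem_filter, hs, Finset.mem_filter] at hO
            obtain ⟨⟨hOim, hOlt⟩, hOd⟩ := hO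
            obtain ⟨b₁, -, rfl⟩ := Finset.mem_image.mp hOim
            rw [card_orbF] at hOlt hOd
            have hp1dvd := per_dvd (v := v) b₁
            have hp1 : per v b₁ = ℓ := by
              rw [hℓ, ← hOd, Nat.div_div_self hp1dvd (by omega)]
            -- pick a point of the block and translate it to contain 0
            have hbne : (ℬ b₁).Nonempty := by
              rw [← Finset.card_pos, hcard]; omega
            obtain ⟨x, hx⟩ := hbne
            set b := (-x) +ᵥ b₁ with hb
            have h0mem : (0 : ZMod v) ∈ ℬ b := by
              rw [hb, hequiv]
              exact Finset.mem_image.mpr ⟨x, hx, by ring⟩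
            have horb : orbF v b = orbF v b₁ := by rw [hb, orbF_vadd]
            have hperb : per v b = ℓ := by
              rw [← card_orbF, horb, card_orbF, hp1]
            have hℓvadd : ((ℓ : ℕ) : ZMod v) +ᵥ b = b := by
              rw [← hperb]; exact per_vadd b
            have hℓmem : ((ℓ : ℕ) : ZMod v) ∈ ℬ b := by
              conv_lhs => skip
              have : ℬ b = (ℬ b).image (· + ((ℓ : ℕ) : ZMod v)) := by
                rw [← hequiv, hℓvadd]
              rw [this]
              exact Finset.mem_image.mpr ⟨0, h0mem, by ring⟩
            refine ⟨b, ?_, horb⟩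
            rw [Finset.mem_coe, Finset.mem_filter]
            exact ⟨Finset.mem_univ b, h0mem, hℓmem⟩
          calc (s.filter (fun O => v / O.card = d)).card
              ≤ (univ.filter (fun b => (0:ZMod v) ∈ ℬ b ∧ ((ℓ : ℕ) : ZMod v) ∈ ℬ b)).card :=
                Finset.card_le_card_of_surjOn _ hsurj
            _ = lam := hpair 0 ((ℓ : ℕ) : ZMod v) hne0
        · rw [Finset.not_nonempty_iff_eq_empty] at hne
          rw [hne]
          simp
  refine ⟨key, ?_⟩
  have hσ : (k.divisors.card : ℝ) ≤ 2 * Real.sqrt k := by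
    calc (k.divisors.card : ℝ) ≤ ((2 * Nat.sqrt k : ℕ) : ℝ) := by
          exact_mod_cast card_divisors_le_two_mul_sqrt k
      _ = 2 * (Nat.sqrt k : ℝ) := by push_cast; ring
      _ ≤ 2 * Real.sqrt k := by
          have := Real.nat_sqrt_le_real_sqrt (a := k)
          linarith
  calc ((((Finset.univ.image (orbF v (ι := ι))).filter (fun O => O.card < v)).card : ℝ))
      ≤ (lam : ℝ) * (k.divisors.card : ℝ) := by exact_mod_cast key
    _ ≤ (lam : ℝ) * (2 * Real.sqrt k) := by
        apply mul_le_mul_of_nonneg_left hσ (by positivity)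
    _ = 2 * lam * Real.sqrt k := by ring
end

section
/- Let $(V,\mathcal{B})$ be a cyclic $(v,k,\lambda)$-design with $h$ short orbits and $m$ full orbits. Then $\frac{\lambda(v-1)}{k(k-1)} - 2\lambda\sqrt{k} \leq m \leq \frac{\lambda(v-1)}{k(k-1)} \leq m + h \leq \frac{\lambda(v-1)}{k(k-1)} + 2\lambda\sqrt{k}$. -/
open Finset

/-!
Double counting pairs gives `|ℬ| = v · λ(v-1)/(k(k-1))`, and the orbits partition the blocks
into `m` orbits of size `v` and `h` orbits of size `< v`, whence
`m ≤ λ(v-1)/(k(k-1)) ≤ m + h`. It remains to show `h ≤ 2λ√k`. A block `B` whose orbit has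
size `ℓ < v` has stabilizer of order `d = v/ℓ > 1`; `B` is a union of cosets of it, so `d ∣ k`,
and `B` is invariant under translation by `ℓ ≠ 0`. Counting pairs `{x, x + ℓ}` shows that there
are at most `λ` orbits of size `ℓ`, and the sizes `ℓ` are determined by the divisors `v/ℓ` of
`k`, of which there are at most `2√k`.
-/

theorem Nat.card_divisors_le_two_mul_sqrt (n : ℕ) : #n.divisors ≤ 2 * n.sqrt := by
  set s := n.sqrt
  have hsmall : #{d ∈ n.divisors | d ≤ s} ≤ s := by
    calc #{d ∈ n.divisors | d ≤ s} ≤ #(Icc 1 s) := card_le_card fun d hd => by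
          simp only [mem_filter, Nat.mem_divisors, mem_Icc] at hd ⊢
          exact ⟨Nat.pos_of_dvd_of_pos hd.1.1 (Nat.pos_of_ne_zero hd.1.2), hd.2⟩
      _ = s := by simp
  have hlarge : #{d ∈ n.divisors | ¬d ≤ s} ≤ s := by
    calc #{d ∈ n.divisors | ¬d ≤ s} ≤ #(Icc 1 s) := card_le_card_of_injOn (n / ·) ?_ ?_
      _ = s := by simp
    · intro d hd
      simp only [coe_filter, Nat.mem_divisors, Set.mem_ofPred_eq, not_le] at hd
      obtain ⟨⟨hdn, hn⟩, hsd⟩ := hd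
      simp only [coe_Icc, Set.mem_Icc]
      refine ⟨Nat.div_pos (Nat.le_of_dvd (Nat.pos_of_ne_zero hn) hdn) (by omega), ?_⟩
      rw [← Nat.lt_succ_iff, Nat.div_lt_iff_lt_mul (by omega)]
      exact (Nat.lt_succ_sqrt n).trans_le (Nat.mul_le_mul_left _ hsd)
    · intro d₁ hd₁ d₂ hd₂ h
      simp only [coe_filter, Nat.mem_divisors, Set.mem_ofPred_eq] at hd₁ hd₂
      rw [← Nat.div_div_self hd₁.1.1 hd₁.1.2, ← Nat.div_div_self hd₂.1.1 hd₂.1.2]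
      exact congrArg (n / ·) h
  rw [← card_filter_add_card_filter_not (· ≤ s)]
  omega

theorem AddSubgroup.card_dvd_card_of_add_mem {G : Type*} [AddGroup G] (H : AddSubgroup G)
    {S : Finset G} (hS : ∀ x ∈ S, ∀ t ∈ H, x + t ∈ S) : Nat.card H ∣ #S := by
  have hpre : (S : Set G) =
      QuotientAddGroup.mk ⁻¹' (QuotientAddGroup.mk '' (S : Set G) : Set (G ⧸ H)) := by
    refine (Set.subset_preimage_image _ _).antisymm ?_
    rintro x ⟨y, hy, hyx⟩
    simpa using hS y hy _ (QuotientAddGroup.eq.mp hyx)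
  have hcard : #S = Nat.card (S : Set G) := by simp
  rw [hcard, hpre, Nat.card_congr (QuotientAddGroup.preimageMkEquivAddSubgroupProdSet H _),
    Nat.card_prod]
  exact dvd_mul_right _ _

section Orbits

variable {v : ℕ} [NeZero v] {ι : Type} [DecidableEq ι] [AddAction (ZMod v) ι]

theorem coe_orbF (b : ι) : (orbF v b : Set ι) = AddAction.orbit (ZMod v) b := by
  ext
  simp [orbF, AddAction.mem_orbit_iff]

theorem mem_orbF_self (b : ι) : b ∈ orbF v b := by
  simp [← mem_coe, coe_orbF]

theorem orbF_eq_of_mem {b c : ι} (hc : c ∈ orbF v b) : orbF v c = orbF v b := by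
  rw [← mem_coe, coe_orbF] at hc
  rw [← coe_inj, coe_orbF, coe_orbF, AddAction.orbit_eq_iff]
  exact hc

theorem card_orbF_le (b : ι) : #(orbF v b) ≤ v :=
  card_image_le.trans (by simp)

theorem card_orbF_eq_index (b : ι) : #(orbF v b) = (AddAction.stabilizer (ZMod v) b).index := by
  rw [AddAction.index_stabilizer, ← coe_orbF, Set.ncard_coe_finset]

theorem card_orbF_mul_card_stabilizer (b : ι) :
    #(orbF v b) * Nat.card (AddAction.stabilizer (ZMod v) b) = v := by
  rw [card_orbF_eq_index, mul_comm, AddSubgroup.card_mul_index, Nat.card_zmod]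

theorem natCast_card_orbF_vadd (b : ι) : (#(orbF v b) : ZMod v) +ᵥ b = b := by
  simpa [card_orbF_eq_index] using AddSubgroup.nsmul_index_mem (AddAction.stabilizer (ZMod v) b) 1

theorem sum_card_orbF_filter [Fintype ι] (p : Finset ι → Prop) [DecidablePred p] :
    ∑ O ∈ univ.image (orbF v) with p O, #O = #{b | p (orbF v b)} := by
  rw [card_eq_sum_card_fiberwise (f := orbF v) (t := {O ∈ univ.image (orbF v) | p O})
    fun b hb => by simpa using hb]
  refine sum_congr rfl fun O hO => ?_
  obtain ⟨hOΩ, hpc⟩ := mem_filter.mp hO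
  obtain ⟨c, -, rfl⟩ := mem_image.mp hOΩ
  congr 1
  ext b
  simp only [mem_filter, mem_univ, true_and]
  constructor
  · intro hb
    rw [← orbF_eq_of_mem hb] at hpc ⊢
    exact ⟨hpc, rfl⟩
  · rintro ⟨-, hb⟩
    exact hb ▸ mem_orbF_self b

end Orbits

section Design

variable {v k lam : ℕ} {ι : Type} (ℬ : ι → Finset (ZMod v))

theorem add_mem_of_vadd_eq [AddAction (ZMod v) ι]
    (hequiv : ∀ (t : ZMod v) (b : ι), ℬ (t +ᵥ b) = (ℬ b).image (· + t))
    {t : ZMod v} {b : ι} (h : t +ᵥ b = b) {x : ZMod v} (hx : x ∈ ℬ b) : x + t ∈ ℬ b := by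
  rw [← h, hequiv]
  exact mem_image_of_mem _ hx

theorem card_stabilizer_dvd [AddAction (ZMod v) ι] (hcard : ∀ b, #(ℬ b) = k)
    (hequiv : ∀ (t : ZMod v) (b : ι), ℬ (t +ᵥ b) = (ℬ b).image (· + t)) (b : ι) :
    Nat.card (AddAction.stabilizer (ZMod v) b) ∣ k :=
  hcard b ▸ AddSubgroup.card_dvd_card_of_add_mem _ fun _ hx _ ht =>
    add_mem_of_vadd_eq ℬ hequiv ht hx

variable [NeZero v] [Fintype ι]

theorem card_mul_eq_of_card_pair (hcard : ∀ b, #(ℬ b) = k)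
    (hpair : ∀ x y : ZMod v, x ≠ y → #{b | x ∈ ℬ b ∧ y ∈ ℬ b} = lam) :
    Fintype.card ι * (k * (k - 1)) = lam * (v * (v - 1)) := by
  have hblock (b : ι) :
      (ℬ b).offDiag = {p ∈ (univ : Finset (ZMod v)).offDiag | p.1 ∈ ℬ b ∧ p.2 ∈ ℬ b} := by
    ext p
    simp only [mem_offDiag, mem_filter, mem_univ, true_and]
    tauto
  calc Fintype.card ι * (k * (k - 1)) = ∑ b, #(ℬ b).offDiag := by
        simp [offDiag_card, hcard, Nat.mul_sub_one]
    _ = ∑ p ∈ (univ : Finset (ZMod v)).offDiag, #{b | p.1 ∈ ℬ b ∧ p.2 ∈ ℬ b} := by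
        simp_rw [hblock]
        exact sum_card_bipartiteAbove_eq_sum_card_bipartiteBelow
          (fun b (p : ZMod v × ZMod v) => p.1 ∈ ℬ b ∧ p.2 ∈ ℬ b)
    _ = lam * (v * (v - 1)) := by
        rw [sum_congr rfl fun p hp => hpair p.1 p.2 (mem_offDiag.mp hp).2.2]
        simp [offDiag_card, Nat.mul_sub_one, mul_comm]

theorem sum_card_filter_add_mem
    (hpair : ∀ x y : ZMod v, x ≠ y → #{b | x ∈ ℬ b ∧ y ∈ ℬ b} = lam)
    {s : ZMod v} (hs : s ≠ 0) :
    ∑ b, #{x ∈ ℬ b | x + s ∈ ℬ b} = lam * v := by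
  have hblock (b : ι) :
      {x ∈ ℬ b | x + s ∈ ℬ b} = ({x | x ∈ ℬ b ∧ x + s ∈ ℬ b} : Finset (ZMod v)) := by
    ext x
    simp only [mem_filter, mem_univ, true_and]
  calc ∑ b, #{x ∈ ℬ b | x + s ∈ ℬ b} = ∑ x, #{b | x ∈ ℬ b ∧ x + s ∈ ℬ b} := by
        simp_rw [hblock]
        exact sum_card_bipartiteAbove_eq_sum_card_bipartiteBelow
          (fun b x => x ∈ ℬ b ∧ x + s ∈ ℬ b)
    _ = lam * v := by
        rw [sum_congr rfl fun x _ => hpair x (x + s) (by simpa using hs)]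
        simp [mul_comm]

theorem lam_mul_div_eq_card_div (hk : 2 ≤ k) (hcard : ∀ b, #(ℬ b) = k)
    (hpair : ∀ x y : ZMod v, x ≠ y → #{b | x ∈ ℬ b ∧ y ∈ ℬ b} = lam) :
    (lam * (v - 1) : ℝ) / (k * (k - 1)) = Fintype.card ι / v := by
  have hk' : (2 : ℝ) ≤ k := by exact_mod_cast hk
  have hv : (v : ℝ) ≠ 0 := by simp [NeZero.ne v]
  rw [div_eq_div_iff (by nlinarith) hv]
  have hN := congrArg (Nat.cast : ℕ → ℝ) (card_mul_eq_of_card_pair ℬ hcard hpair)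
  push_cast [Nat.one_le_of_lt hk, Nat.one_le_iff_ne_zero.mpr (NeZero.ne v)] at hN
  linarith

end Design

section OrbitCounts

variable {v k lam : ℕ} [NeZero v] {ι : Type} [Fintype ι] [DecidableEq ι] [AddAction (ZMod v) ι]

theorem card_full_orbits_mul_le :
    #{O ∈ univ.image (orbF v (ι := ι)) | #O = v} * v ≤ Fintype.card ι :=
  calc #{O ∈ univ.image (orbF v (ι := ι)) | #O = v} * v
      = ∑ O ∈ univ.image (orbF v (ι := ι)) with #O = v, #O := by
        rw [sum_congr rfl fun O hO => (mem_filter.mp hO).2, sum_const, smul_eq_mul]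
    _ = #{b | #(orbF v b) = v} := sum_card_orbF_filter _
    _ ≤ Fintype.card ι := card_le_univ _

theorem card_le_card_orbits_mul : Fintype.card ι ≤ #(univ.image (orbF v (ι := ι))) * v :=
  calc Fintype.card ι = ∑ O ∈ univ.image (orbF v (ι := ι)), #O := by
        simpa using (sum_card_orbF_filter (v := v) fun _ : Finset ι => True).symm
    _ ≤ ∑ _O ∈ univ.image (orbF v (ι := ι)), v := sum_le_sum fun O hO => by
        obtain ⟨b, -, rfl⟩ := mem_image.mp hO
        exact card_orbF_le b
    _ = #(univ.image (orbF v (ι := ι))) * v := by rw [sum_const, smul_eq_mul]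

theorem card_full_orbits_add_card_short_orbits :
    #{O ∈ univ.image (orbF v (ι := ι)) | #O = v} + #{O ∈ univ.image (orbF v (ι := ι)) | #O < v} =
      #(univ.image (orbF v (ι := ι))) := by
  have hshort : {O ∈ univ.image (orbF v (ι := ι)) | #O < v} =
      {O ∈ univ.image (orbF v (ι := ι)) | ¬#O = v} := by
    refine filter_congr fun O hO => ?_
    obtain ⟨b, -, rfl⟩ := mem_image.mp hO
    have := card_orbF_le (v := v) b
    omega
  rw [hshort, card_filter_add_card_filter_not]

variable (ℬ : ι → Finset (ZMod v))

theorem card_orbits_of_card_eq_le (hk : 0 < k) (hcard : ∀ b, #(ℬ b) = k)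
    (hpair : ∀ x y : ZMod v, x ≠ y → #{b | x ∈ ℬ b ∧ y ∈ ℬ b} = lam)
    (hequiv : ∀ (t : ZMod v) (b : ι), ℬ (t +ᵥ b) = (ℬ b).image (· + t))
    {ℓ : ℕ} (hℓ : ℓ < v) :
    #{O ∈ univ.image (orbF v (ι := ι)) | #O = ℓ} ≤ lam := by
  set T := #{O ∈ univ.image (orbF v (ι := ι)) | #O = ℓ}
  obtain hT | ⟨O, hO⟩ := T.eq_zero_or_pos.imp_right card_pos.mp
  · omega
  obtain ⟨hOΩ, hOℓ⟩ := mem_filter.mp hO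
  obtain ⟨b₀, -, rfl⟩ := mem_image.mp hOΩ
  have hℓpos : 0 < ℓ := hOℓ ▸ card_pos.mpr ⟨b₀, mem_orbF_self b₀⟩
  have hs : (ℓ : ZMod v) ≠ 0 := by
    rw [Ne, ZMod.natCast_eq_zero_iff]
    exact Nat.not_dvd_of_pos_of_lt hℓpos hℓ
  -- `ℓ` is the index of the stabilizer, so translation by `ℓ` fixes blocks in orbits of size `ℓ`
  have hinv : ∀ b ∈ ({b | #(orbF v b) = ℓ} : Finset ι),
      #{x ∈ ℬ b | x + (ℓ : ZMod v) ∈ ℬ b} = k := by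
    intro b hb
    have hvadd := natCast_card_orbF_vadd (v := v) b
    rw [(mem_filter.mp hb).2] at hvadd
    rw [filter_true_of_mem fun x hx => add_mem_of_vadd_eq ℬ hequiv hvadd hx, hcard]
  have hblocks : T * ℓ = #({b | #(orbF v b) = ℓ} : Finset ι) := by
    rw [← sum_card_orbF_filter (v := v) fun O : Finset ι => #O = ℓ,
      sum_congr rfl fun O hO => (mem_filter.mp hO).2, sum_const, smul_eq_mul]
  have hv : v ≤ ℓ * k := by
    conv_lhs => rw [← card_orbF_mul_card_stabilizer (v := v) b₀, hOℓ]
    exact Nat.mul_le_mul_left _ (Nat.le_of_dvd hk (card_stabilizer_dvd ℬ hcard hequiv b₀))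
  refine Nat.le_of_mul_le_mul_right ?_ (Nat.mul_pos hℓpos hk)
  calc T * (ℓ * k)
      = ∑ b ∈ ({b | #(orbF v b) = ℓ} : Finset ι), #{x ∈ ℬ b | x + (ℓ : ZMod v) ∈ ℬ b} := by
        rw [sum_congr rfl hinv, sum_const, smul_eq_mul, ← hblocks, mul_assoc]
    _ ≤ ∑ b, #{x ∈ ℬ b | x + (ℓ : ZMod v) ∈ ℬ b} := sum_le_sum_of_subset (subset_univ _)
    _ = lam * v := sum_card_filter_add_mem ℬ hpair hs
    _ ≤ lam * (ℓ * k) := Nat.mul_le_mul_left _ hv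

theorem card_short_orbits_le (hk : 0 < k) (hcard : ∀ b, #(ℬ b) = k)
    (hpair : ∀ x y : ZMod v, x ≠ y → #{b | x ∈ ℬ b ∧ y ∈ ℬ b} = lam)
    (hequiv : ∀ (t : ZMod v) (b : ι), ℬ (t +ᵥ b) = (ℬ b).image (· + t)) :
    #{O ∈ univ.image (orbF v (ι := ι)) | #O < v} ≤ lam * (2 * k.sqrt) := by
  set S := {O ∈ univ.image (orbF v (ι := ι)) | #O < v}
  have hsize : ∀ ℓ ∈ S.image card, ℓ < v ∧ ℓ ∣ v ∧ v / ℓ ∣ k := by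
    intro ℓ hℓ
    obtain ⟨O, hO, rfl⟩ := mem_image.mp hℓ
    obtain ⟨hOΩ, hOv⟩ := mem_filter.mp hO
    obtain ⟨b, -, rfl⟩ := mem_image.mp hOΩ
    have hmul := card_orbF_mul_card_stabilizer (v := v) b
    refine ⟨hOv, Dvd.intro _ hmul, ?_⟩
    rw [Nat.div_eq_of_eq_mul_right (card_pos.mpr ⟨b, mem_orbF_self b⟩) hmul.symm]
    exact card_stabilizer_dvd ℬ hcard hequiv b
  calc #S ≤ lam * #(S.image card) := card_le_mul_card_image S lam fun ℓ hℓ =>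
        (card_le_card (filter_subset_filter _ (filter_subset _ _))).trans
          (card_orbits_of_card_eq_le (v := v) ℬ hk hcard hpair hequiv (hsize ℓ hℓ).1)
    _ ≤ lam * #k.divisors := by
        refine Nat.mul_le_mul_left _ (card_le_card_of_injOn (v / ·) ?_ ?_)
        · exact fun ℓ hℓ => Nat.mem_divisors.mpr ⟨(hsize ℓ hℓ).2.2, hk.ne'⟩
        · intro ℓ₁ h₁ ℓ₂ h₂ (h : v / ℓ₁ = v / ℓ₂)
          rw [← Nat.div_div_self (hsize ℓ₁ h₁).2.1 (NeZero.ne v), h,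
            Nat.div_div_self (hsize ℓ₂ h₂).2.1 (NeZero.ne v)]
    _ ≤ lam * (2 * k.sqrt) := Nat.mul_le_mul_left _ k.card_divisors_le_two_mul_sqrt

end OrbitCounts

theorem stmt_8_general (v k lam : ℕ) [NeZero v] (hk : 2 ≤ k)
    (ι : Type) [Fintype ι] [DecidableEq ι] [AddAction (ZMod v) ι]
    (ℬ : ι → Finset (ZMod v))
    (hcard : ∀ b, (ℬ b).card = k)
    (hpair : ∀ x y : ZMod v, x ≠ y →
      (Finset.univ.filter (fun b => x ∈ ℬ b ∧ y ∈ ℬ b)).card = lam)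
    (hequiv : ∀ (t : ZMod v) (b : ι), ℬ (t +ᵥ b) = (ℬ b).image (· + t))
    (m h : ℕ)
    (hm : m = ((Finset.univ.image (orbF v (ι := ι))).filter (fun O => O.card = v)).card)
    (hh : h = ((Finset.univ.image (orbF v (ι := ι))).filter (fun O => O.card < v)).card) :
    (lam * (v - 1) : ℝ) / (k * (k - 1)) - 2 * lam * Real.sqrt k ≤ m ∧
      (m : ℝ) ≤ (lam * (v - 1) : ℝ) / (k * (k - 1)) ∧
      (lam * (v - 1) : ℝ) / (k * (k - 1)) ≤ m + h ∧
      ((m + h : ℕ) : ℝ) ≤ (lam * (v - 1) : ℝ) / (k * (k - 1)) + 2 * lam * Real.sqrt k := by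
  have hv : (0 : ℝ) < v := by simp [Nat.pos_of_neZero v]
  have hlower : (m : ℝ) ≤ Fintype.card ι / v := by
    rw [le_div_iff₀ hv, hm]
    exact_mod_cast card_full_orbits_mul_le
  have hupper : (Fintype.card ι : ℝ) / v ≤ m + h := by
    have := card_le_card_orbits_mul (v := v) (ι := ι)
    rw [← card_full_orbits_add_card_short_orbits, ← hm, ← hh] at this
    rw [div_le_iff₀ hv]
    exact_mod_cast this
  have hshort : (h : ℝ) ≤ 2 * lam * √k := by
    have := card_short_orbits_le ℬ (by omega) hcard hpair hequiv
    rw [← hh] at this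
    calc (h : ℝ) ≤ lam * (2 * k.sqrt) := by exact_mod_cast this
      _ = 2 * lam * k.sqrt := by ring
      _ ≤ 2 * lam * √k := by gcongr; exact Real.nat_sqrt_le_real_sqrt
  rw [lam_mul_div_eq_card_div ℬ hk hcard hpair, Nat.cast_add]
  exact ⟨by linarith, hlower, hupper, by linarith⟩

/-- Let `(V,ℬ)` be a cyclic `(v,k,λ)`-design with `h` short orbits and `m` full orbits.
Then `λ(v-1)/(k(k-1)) - 2λ√k ≤ m ≤ λ(v-1)/(k(k-1)) ≤ m + h ≤ λ(v-1)/(k(k-1)) + 2λ√k`. -/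
theorem stmt_8 (v k lam : ℕ) [NeZero v] (hv : 2 ≤ v) (hk : 2 ≤ k) (hlam : 1 ≤ lam)
    (ι : Type) [Fintype ι] [DecidableEq ι] [AddAction (ZMod v) ι]
    (ℬ : ι → Finset (ZMod v))
    (hcard : ∀ b, (ℬ b).card = k)
    (hpair : ∀ x y : ZMod v, x ≠ y →
      (Finset.univ.filter (fun b => x ∈ ℬ b ∧ y ∈ ℬ b)).card = lam)
    (hequiv : ∀ (t : ZMod v) (b : ι), ℬ (t +ᵥ b) = (ℬ b).image (· + t))
    (m h : ℕ)
    (hm : m = ((Finset.univ.image (orbF v (ι := ι))).filter (fun O => O.card = v)).card)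
    (hh : h = ((Finset.univ.image (orbF v (ι := ι))).filter (fun O => O.card < v)).card) :
    (lam * (v - 1) : ℝ) / (k * (k - 1)) - 2 * lam * Real.sqrt k ≤ m ∧
      (m : ℝ) ≤ (lam * (v - 1) : ℝ) / (k * (k - 1)) ∧
      (lam * (v - 1) : ℝ) / (k * (k - 1)) ≤ m + h ∧
      ((m + h : ℕ) : ℝ) ≤ (lam * (v - 1) : ℝ) / (k * (k - 1)) + 2 * lam * Real.sqrt k :=
  stmt_8_general v k lam hk ι ℬ hcard hpair hequiv m h hm hh
end
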